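/- arXiv:2301.08142 — 2 statements merged into one kernel-verified Lean document; each statement's English description precedes it below -/
import Mathlib

section
/- (HMC Rolle's theorem) Let u < v be real numbers and let f : [u,v]_ℚ → ℝ be a function whose derivative f' is defined at every point of [u,v]_ℚ, is uniform on [u,v]_ℚ, and is uniformly continuous, and suppose f(u) = f(v) (extended values). Then there exists a real number x with u < x < v and f'(x) = 0, where f'(x) denotes the extended value of f' at x. -/
/-! Since `[u,v]_ℚ` is dense in `[u, v]`, the uniformly continuous `f'` extends to a continuous
`G` on `[u, v]`. So `f'` is bounded, and the uniform derivative makes `f` uniformly continuous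
too, with continuous extension `F`. Letting rational points tend to real ones in the uniform
estimate `|f b - f a - f' a (b - a)| ≤ ε |b - a|` shows that `F` has derivative `G` on `[u, v]`,
and `F u = fu = fv = F v`. Rolle's theorem for `F` gives `x ∈ (u, v)` with `G x = 0`, and `G x` is
the extended value of `f'` at `x`. -/

open Filter Topology

/-- The rational interval [u,v]_ℚ = {a ∈ ℚ : u ≤ a ≤ v}. -/
def RatIcc (u v : ℝ) : Set ℚ := {a : ℚ | u ≤ (a : ℝ) ∧ (a : ℝ) ≤ v}

/-- Uniform continuity of f : M → ℝ for M ⊆ ℚ. -/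
def UC (M : Set ℚ) (f : ℚ → ℝ) : Prop :=
  ∀ ε : ℝ, 0 < ε → ∃ δ : ℝ, 0 < δ ∧
    ∀ a ∈ M, ∀ b ∈ M, |(a : ℝ) - (b : ℝ)| ≤ δ → |f a - f b| ≤ ε

/-- y is the extended value of f at x: every sequence in M converging to x has
f-images converging to y. -/
def ExtVal (M : Set ℚ) (f : ℚ → ℝ) (x y : ℝ) : Prop :=
  ∀ a : ℕ → ℚ, (∀ n, a n ∈ M) →
    Tendsto (fun n => ((a n : ℝ))) atTop (𝓝 x) →
    Tendsto (fun n => f (a n)) atTop (𝓝 y)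

/-- The derivative of f at a ∈ M equals y. -/
def HasDerivAtPt (M : Set ℚ) (f : ℚ → ℝ) (a : ℚ) (y : ℝ) : Prop :=
  ∀ ε : ℝ, 0 < ε → ∃ δ : ℝ, 0 < δ ∧
    ∀ b ∈ M, 0 < |(b : ℝ) - (a : ℝ)| → |(b : ℝ) - (a : ℝ)| ≤ δ →
      |(f b - f a) / ((b : ℝ) - (a : ℝ)) - y| ≤ ε

/-- The derivative function f' is uniform on D ⊆ M: the difference quotients converge
to f' uniformly in the base point a ∈ D. -/
def UniformDeriv (M : Set ℚ) (f : ℚ → ℝ) (D : Set ℚ) (f' : ℚ → ℝ) : Prop :=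
  ∀ ε : ℝ, 0 < ε → ∃ δ : ℝ, 0 < δ ∧
    ∀ a ∈ D, ∀ b ∈ M, 0 < |(b : ℝ) - (a : ℝ)| → |(b : ℝ) - (a : ℝ)| ≤ δ →
      |(f b - f a) / ((b : ℝ) - (a : ℝ)) - f' a| ≤ ε

open Set

variable {u v : ℝ}

def ratIccToIcc (u v : ℝ) : RatIcc u v → Icc u v := fun a => ⟨a, a.2⟩

lemma isometry_ratIccToIcc : Isometry (ratIccToIcc u v) :=
  Isometry.of_dist_eq fun _ _ => rfl

lemma denseRange_ratIccToIcc (huv : u < v) : DenseRange (ratIccToIcc u v) := by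
  refine Metric.denseRange_iff.2 fun x r hr => ?_
  obtain ⟨hux, hxv⟩ := x.2
  obtain ⟨q, hq₁, hq₂⟩ := exists_rat_btwn (x := max u (x - r)) (y := min v (x + r))
    (max_lt (lt_min huv (by linarith)) (lt_min (by linarith) (by linarith)))
  rw [max_lt_iff] at hq₁
  rw [lt_min_iff] at hq₂
  refine ⟨⟨q, hq₁.1.le, hq₂.1.le⟩, ?_⟩
  rw [Subtype.dist_eq, Real.dist_eq, abs_sub_lt_iff]
  constructor <;> simp only [ratIccToIcc] <;> linarith

lemma exists_seq_ratIcc_tendsto (huv : u < v) {x : ℝ} (hx : x ∈ Icc u v) :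
    ∃ a : ℕ → ℚ, (∀ n, a n ∈ RatIcc u v) ∧ Tendsto (fun n => (a n : ℝ)) atTop (𝓝 x) := by
  obtain ⟨b, hb, hbx⟩ := mem_closure_iff_seq_limit.1 (denseRange_ratIccToIcc huv ⟨x, hx⟩)
  choose a ha using hb
  refine ⟨fun n => a n, fun n => (a n).2, ?_⟩
  exact ((continuous_subtype_val.tendsto _).comp hbx).congr fun n => by
    rw [Function.comp_apply, ← ha n]; rfl

lemma UC.uniformContinuous_restrict {M : Set ℚ} {g : ℚ → ℝ} (hg : UC M g) :
    UniformContinuous fun a : M => g a := by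
  refine Metric.uniformContinuous_iff.2 fun ε hε => ?_
  obtain ⟨δ, hδ, h⟩ := hg (ε / 2) (half_pos hε)
  exact ⟨δ, hδ, fun {a b} hab => (h a a.2 b b.2 hab.le).trans_lt (half_lt_self hε)⟩

lemma extVal_of_continuousAt {M : Set ℚ} {g : ℚ → ℝ} {G : ℝ → ℝ} {x : ℝ}
    (hG : ContinuousAt G x) (hgG : ∀ a ∈ M, G a = g a) : ExtVal M g x (G x) :=
  fun _ ha hax => (hG.tendsto.comp hax).congr fun n => hgG _ (ha n)

/-- The continuous extension of `g` from `[u,v]_ℚ` to `[u, v]`, made constant outside `[u, v]`;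
it is only meaningful when `g` is uniformly continuous on `[u,v]_ℚ`. -/
noncomputable def ratIccExtend (huv : u < v) (g : ℚ → ℝ) : ℝ → ℝ :=
  IccExtend huv.le <| (isometry_ratIccToIcc.isUniformInducing.isDenseInducing
    (denseRange_ratIccToIcc huv)).extend (fun a : RatIcc u v => g a)

section ratIccExtend

variable (huv : u < v) {g : ℚ → ℝ} (hg : UC (RatIcc u v) g)
include huv hg

lemma continuous_ratIccExtend : Continuous (ratIccExtend huv g) :=
  (uniformContinuous_uniformly_extend isometry_ratIccToIcc.isUniformInducing
    (denseRange_ratIccToIcc huv) hg.uniformContinuous_restrict).continuous.Icc_extend'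

lemma ratIccExtend_ratCast {a : ℚ} (ha : a ∈ RatIcc u v) : ratIccExtend huv g a = g a := by
  rw [ratIccExtend, IccExtend_of_mem _ _ ha]
  exact uniformly_extend_of_ind isometry_ratIccToIcc.isUniformInducing
    (denseRange_ratIccToIcc huv) hg.uniformContinuous_restrict ⟨a, ha⟩

lemma extVal_ratIccExtend (x : ℝ) : ExtVal (RatIcc u v) g x (ratIccExtend huv g x) :=
  extVal_of_continuousAt (continuous_ratIccExtend huv hg).continuousAt
    fun _ ha => ratIccExtend_ratCast huv hg ha

lemma ratIccExtend_eq_of_extVal {x y : ℝ} (hx : x ∈ Icc u v) (h : ExtVal (RatIcc u v) g x y) :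
    ratIccExtend huv g x = y := by
  obtain ⟨a, ha, hax⟩ := exists_seq_ratIcc_tendsto huv hx
  exact tendsto_nhds_unique (extVal_ratIccExtend huv hg x a ha hax) (h a ha hax)

lemma UC.exists_abs_le : ∃ C, ∀ a ∈ RatIcc u v, |g a| ≤ C := by
  obtain ⟨C, hC⟩ :=
    isCompact_Icc.exists_bound_of_continuousOn (continuous_ratIccExtend huv hg).continuousOn
  exact ⟨C, fun a ha => ratIccExtend_ratCast huv hg ha ▸ hC a ha⟩

end ratIccExtend

lemma UniformDeriv.abs_sub_sub_mul_le {M D : Set ℚ} {f f' : ℚ → ℝ} (h : UniformDeriv M f D f')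
    {ε : ℝ} (hε : 0 < ε) : ∃ δ > 0, ∀ a ∈ D, ∀ b ∈ M, |(b : ℝ) - a| ≤ δ →
      |f b - f a - f' a * (b - a)| ≤ ε * |(b : ℝ) - a| := by
  obtain ⟨δ, hδ, h⟩ := h ε hε
  refine ⟨δ, hδ, fun a ha b hb hba => ?_⟩
  rcases eq_or_ne b a with rfl | hne
  · simp
  have hpos : 0 < |(b : ℝ) - a| := abs_pos.2 (sub_ne_zero.2 (Rat.cast_injective.ne hne))
  calc |f b - f a - f' a * (b - a)|
      = |(f b - f a) / ((b : ℝ) - a) - f' a| * |(b : ℝ) - a| := by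
        rw [← abs_mul, sub_mul, div_mul_cancel₀ _ (abs_pos.1 hpos), mul_comm]
    _ ≤ ε * |(b : ℝ) - a| := by gcongr; exact h a ha b hb hpos hba

lemma UniformDeriv.uc {M : Set ℚ} {f f' : ℚ → ℝ} (h : UniformDeriv M f M f') {C : ℝ}
    (hC : ∀ a ∈ M, |f' a| ≤ C) : UC M f := by
  intro ε hε
  obtain ⟨δ, hδ, hδf⟩ := h.abs_sub_sub_mul_le one_pos
  have hK : 0 < |C| + 1 := by positivity
  refine ⟨min δ (ε / (|C| + 1)), by positivity, fun a ha b hb hab => ?_⟩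
  have hab' : |(a : ℝ) - b| ≤ δ := hab.trans (min_le_left _ _)
  calc |f a - f b| ≤ |f a - f b - f' b * (a - b)| + |f' b| * |(a : ℝ) - b| := by
        rw [← abs_mul]; exact (abs_add_le _ _).trans_eq' (by rw [sub_add_cancel])
    _ ≤ 1 * |(a : ℝ) - b| + |C| * |(a : ℝ) - b| :=
        add_le_add (hδf b hb a ha hab')
          (mul_le_mul_of_nonneg_right ((hC b hb).trans (le_abs_self C)) (abs_nonneg _))
    _ = (|C| + 1) * |(a : ℝ) - b| := by ring
    _ ≤ (|C| + 1) * (ε / (|C| + 1)) := by gcongr; exact hab.trans (min_le_right _ _)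
    _ = ε := mul_div_cancel₀ ε hK.ne'

lemma forall_Icc_of_forall_ratIcc (huv : u < v) {s : Set (ℝ × ℝ)} (hs : IsClosed s)
    (h : ∀ a ∈ RatIcc u v, ∀ b ∈ RatIcc u v, ((a : ℝ), (b : ℝ)) ∈ s) {p q : ℝ}
    (hp : p ∈ Icc u v) (hq : q ∈ Icc u v) : (p, q) ∈ s := by
  obtain ⟨a, ha, hap⟩ := exists_seq_ratIcc_tendsto huv hp
  obtain ⟨b, hb, hbq⟩ := exists_seq_ratIcc_tendsto huv hq
  exact hs.mem_of_tendsto (hap.prodMk_nhds hbq) (Eventually.of_forall fun n => h _ (ha n) _ (hb n))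

lemma UniformDeriv.hasDerivWithinAt_Icc (huv : u < v) {f f' : ℚ → ℝ}
    (h : UniformDeriv (RatIcc u v) f (RatIcc u v) f') {F G : ℝ → ℝ} (hF : Continuous F)
    (hG : Continuous G) (hfF : ∀ a ∈ RatIcc u v, F a = f a)
    (hf'G : ∀ a ∈ RatIcc u v, G a = f' a) {x : ℝ} (hx : x ∈ Icc u v) :
    HasDerivWithinAt F (G x) (Icc u v) x := by
  rw [hasDerivWithinAt_iff_isLittleO, Asymptotics.isLittleO_iff]
  intro ε hε
  obtain ⟨δ, hδ, hδf⟩ := h.abs_sub_sub_mul_le hε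
  -- the estimate for `|q - p| < δ`, as a closed condition on `(p, q)`
  let s : Set (ℝ × ℝ) := {z | δ ≤ |z.2 - z.1|} ∪
    {z | |F z.2 - F z.1 - G z.1 * (z.2 - z.1)| ≤ ε * |z.2 - z.1|}
  have hs : IsClosed s :=
    (isClosed_le (by fun_prop) (by fun_prop)).union (isClosed_le (by fun_prop) (by fun_prop))
  have hrat : ∀ a ∈ RatIcc u v, ∀ b ∈ RatIcc u v, ((a : ℝ), (b : ℝ)) ∈ s := by
    intro a ha b hb
    rcases le_or_gt δ |(b : ℝ) - a| with hfar | hnear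
    · exact Or.inl hfar
    · right
      show |F b - F a - G a * (b - a)| ≤ ε * |(b : ℝ) - a|
      rw [hfF a ha, hfF b hb, hf'G a ha]
      exact hδf a ha b hb hnear.le
  filter_upwards [self_mem_nhdsWithin, nhdsWithin_le_nhds (Metric.ball_mem_nhds x hδ)]
    with y hy hyx
  rw [Metric.mem_ball, Real.dist_eq] at hyx
  have := (forall_Icc_of_forall_ratIcc huv hs hrat hx hy).resolve_left (not_le.2 hyx)
  simpa [mul_comm] using this

theorem hmc_rolle_general (u v : ℝ) (huv : u < v) (f f' : ℚ → ℝ)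
    (hunif : UniformDeriv (RatIcc u v) f (RatIcc u v) f')
    (hUC : UC (RatIcc u v) f')
    (fu fv : ℝ)
    (hfu : ExtVal (RatIcc u v) f u fu)
    (hfv : ExtVal (RatIcc u v) f v fv)
    (heq : fu = fv) :
    ∃ x : ℝ, u < x ∧ x < v ∧ ExtVal (RatIcc u v) f' x 0 := by
  obtain ⟨C, hC⟩ := UC.exists_abs_le huv hUC
  have hf : UC (RatIcc u v) f := hunif.uc hC
  have hFu := ratIccExtend_eq_of_extVal huv hf (left_mem_Icc.2 huv.le) hfu
  have hFv := ratIccExtend_eq_of_extVal huv hf (right_mem_Icc.2 huv.le) hfv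
  have hF' : ∀ x ∈ Ioo u v, HasDerivAt (ratIccExtend huv f) (ratIccExtend huv f' x) x :=
    fun x hx => (hunif.hasDerivWithinAt_Icc huv (continuous_ratIccExtend huv hf)
      (continuous_ratIccExtend huv hUC) (fun _ ha => ratIccExtend_ratCast huv hf ha)
      (fun _ ha => ratIccExtend_ratCast huv hUC ha) (Ioo_subset_Icc_self hx)).hasDerivAt
      (Icc_mem_nhds hx.1 hx.2)
  obtain ⟨x, hx, hx0⟩ := exists_hasDerivAt_eq_zero huv
    (continuous_ratIccExtend huv hf).continuousOn (hFu.trans (heq.trans hFv.symm)) hF'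
  exact ⟨x, hx.1, hx.2, hx0 ▸ extVal_ratIccExtend huv hUC x⟩

/-- HMC Rolle's theorem: if f : [u,v]_ℚ → ℝ has a derivative f' defined everywhere,
uniform and UC on [u,v]_ℚ, and the extended values f(u), f(v) coincide, then the
extended value of f' vanishes at some x with u < x < v. -/
theorem hmc_rolle (u v : ℝ) (huv : u < v) (f f' : ℚ → ℝ)
    (hderiv : ∀ a ∈ RatIcc u v, HasDerivAtPt (RatIcc u v) f a (f' a))
    (hunif : UniformDeriv (RatIcc u v) f (RatIcc u v) f')
    (hUC : UC (RatIcc u v) f')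
    (fu fv : ℝ)
    (hfu : ExtVal (RatIcc u v) f u fu)
    (hfv : ExtVal (RatIcc u v) f v fv)
    (heq : fu = fv) :
    ∃ x : ℝ, u < x ∧ x < v ∧ ExtVal (RatIcc u v) f' x 0 :=
  hmc_rolle_general u v huv f f' hunif hUC fu fv hfu hfv heq
end

section
/- (Iterated quasi-formal shifts) Let x : ℕ → ℝ be coefficients of a convergent formal power series and let s, t ∈ ℝ. Then for every n, ∑_{m=n}^∞ C(m,n) (∑_{l=m}^∞ C(l,m) x_l s^{l−m}) t^{m−n} = ∑_{l=n}^∞ C(l,n) x_l (s+t)^{l−n}, i.e. shifting by s and then by t equals shifting by s+t; all the series involved converge absolutely. -/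
/-!
Group the terms of the double series `∑ₘ ∑ₗ` by `k = m + l`. The identity
`C(n+m, n) C(n+m+l, n+m) = C(n+m+l, n) C(m+l, m)` and the binomial theorem turn the `k`-th group
into the `k`-th term of the shift by `s + t`. The same computation for `|x|`, `|s|`, `|t|` shows
that the double family is absolutely summable, because `xₙ cⁿ → 0` for every `c` makes
`∑ |xₙ| cⁿ` converge for every `c`; so the double series may be regrouped.
-/

open Filter Topology Finset

/-- `shiftCoeff x s m` is the `m`-th coefficient of the quasi-formal shift `f(a + s)`; its series
is indexed by the offset `l = k - m`, which avoids truncated subtraction. -/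
def shiftTerm {R : Type*} [Semiring R] (x : ℕ → R) (s : R) (m l : ℕ) : R :=
  ((m + l).choose m : R) * x (m + l) * s ^ l

noncomputable def shiftCoeff {R : Type*} [Semiring R] [TopologicalSpace R] (x : ℕ → R) (s : R)
    (m : ℕ) : R :=
  ∑' l, shiftTerm x s m l

theorem Nat.choose_mul_choose_add (n i j : ℕ) :
    (n + i).choose n * (n + i + j).choose (n + i) = (n + i + j).choose n * (i + j).choose i := by
  rw [mul_comm, Nat.choose_mul (Nat.le_add_right n i)]
  congr 2 <;> omega

theorem sum_antidiagonal_shiftTerm_shiftTerm {R : Type*} [CommSemiring R] (x : ℕ → R)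
    (s t : R) (n k : ℕ) :
    ∑ p ∈ antidiagonal k, shiftTerm (fun m => shiftTerm x s m p.2) t n p.1 =
      shiftTerm x (s + t) n k := by
  rw [shiftTerm, add_comm s t, (Commute.all t s).add_pow', mul_sum]
  refine sum_congr rfl fun ⟨i, j⟩ hij => ?_
  obtain rfl : i + j = k := HasAntidiagonal.mem_antidiagonal.mp hij
  have hchoose := congrArg (Nat.cast : ℕ → R) (Nat.choose_mul_choose_add n i j)
  push_cast at hchoose
  simp only [shiftTerm, nsmul_eq_mul, ← add_assoc]
  calc ((n + i).choose n : R) * ((n + i + j).choose (n + i) * x (n + i + j) * s ^ j) * t ^ i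
      = ((n + i).choose n * (n + i + j).choose (n + i) : R) * (x (n + i + j) * t ^ i * s ^ j) := by
        ring
    _ = _ := by rw [hchoose]; ring

theorem abs_shiftTerm (x : ℕ → ℝ) (s : ℝ) (m l : ℕ) :
    |shiftTerm x s m l| = shiftTerm (fun i => |x i|) |s| m l := by
  simp only [shiftTerm, abs_mul, abs_pow, Nat.abs_cast]

theorem shiftTerm_shiftCoeff {𝕜 : Type*} [DivisionRing 𝕜] [TopologicalSpace 𝕜]
    [IsTopologicalSemiring 𝕜] [T2Space 𝕜] (x : ℕ → 𝕜) (s t : 𝕜) (n m : ℕ) :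
    shiftTerm (shiftCoeff x s) t n m = ∑' l, shiftTerm (fun i => shiftTerm x s i l) t n m := by
  rw [shiftTerm, shiftCoeff, ← tsum_mul_left, ← tsum_mul_right]
  rfl

theorem summable_iff_summable_sum_antidiagonal_of_nonneg {f : ℕ × ℕ → ℝ} (hf : 0 ≤ f) :
    Summable f ↔ Summable fun k => ∑ p ∈ antidiagonal k, f p := by
  rw [← HasAntidiagonal.sigmaAntidiagonalEquivProd.summable_iff,
    summable_sigma_of_nonneg (f := f ∘ _) fun _ => hf _]
  simp only [Function.comp_apply, HasAntidiagonal.sigmaAntidiagonalEquivProd_apply,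
    Finset.tsum_subtype (antidiagonal _) f, Summable.of_finite, implies_true, true_and]

theorem Summable.tsum_prod_eq_tsum_sum_antidiagonal {E : Type*} [NormedAddCommGroup E]
    [CompleteSpace E] {f : ℕ × ℕ → E} (hf : Summable f) :
    ∑' i, ∑' j, f (i, j) = ∑' k, ∑ p ∈ antidiagonal k, f p := by
  have hsigma : Summable fun c => f (HasAntidiagonal.sigmaAntidiagonalEquivProd c) :=
    HasAntidiagonal.sigmaAntidiagonalEquivProd.summable_iff.mpr hf
  rw [← hf.tsum_prod, ← HasAntidiagonal.sigmaAntidiagonalEquivProd.tsum_eq, hsigma.tsum_sigma]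
  simp only [HasAntidiagonal.sigmaAntidiagonalEquivProd_apply,
    Finset.tsum_subtype (antidiagonal _) f]

theorem summable_abs_mul_pow_of_tendsto {x : ℕ → ℝ}
    (hx : ∀ c : ℝ, 0 < c → Tendsto (fun n => x n * c ^ n) atTop (𝓝 0)) (c : ℝ) :
    Summable fun n => |x n * c ^ n| := by
  set d := 2 * (|c| + 1)
  have hd0 : 0 < d := by positivity
  have hsmall : ∀ᶠ n in atTop, |x n * d ^ n| ≤ 1 :=
    (hx d hd0).abs.eventually (ge_mem_nhds (by norm_num))
  refine summable_geometric_two.of_norm_bounded_eventually_nat (hsmall.mono fun n hn => ?_)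
  have hratio : |c| / d ≤ 1 / 2 := by
    rw [div_le_iff₀ hd0]; linarith [abs_nonneg c]
  calc ‖|x n * c ^ n|‖ = |x n * d ^ n| * (|c| / d) ^ n := by
        rw [Real.norm_eq_abs, abs_abs, abs_mul, abs_mul, abs_pow, abs_pow, abs_of_pos hd0,
          div_pow]
        field_simp
    _ ≤ 1 * (1 / 2) ^ n := by gcongr
    _ = (1 / 2) ^ n := one_mul _

theorem summable_abs_shiftTerm {x : ℕ → ℝ} (hx : ∀ c : ℝ, Summable fun n => |x n * c ^ n|)
    (n : ℕ) (c : ℝ) : Summable fun k => |shiftTerm x c n k| := by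
  set d := |c| + 1
  have hd1 : 1 ≤ d := by linarith [abs_nonneg c]
  have htail : Summable fun k => |x (n + k) * (2 * d) ^ (n + k)| := by
    simpa only [add_comm n] using (summable_nat_add_iff n).mpr (hx (2 * d))
  refine htail.of_nonneg_of_le (fun _ => abs_nonneg _) fun k => ?_
  have hchoose : ((n + k).choose n : ℝ) ≤ 2 ^ (n + k) := by
    exact_mod_cast Nat.choose_le_two_pow (n + k) n
  have hpow : |c| ^ k ≤ d ^ (n + k) :=
    (pow_le_pow_left₀ (abs_nonneg c) (by linarith) k).trans
      (pow_le_pow_right₀ hd1 (Nat.le_add_left k n))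
  calc |shiftTerm x c n k| = ((n + k).choose n : ℝ) * |x (n + k)| * |c| ^ k := abs_shiftTerm ..
    _ ≤ 2 ^ (n + k) * |x (n + k)| * d ^ (n + k) := by gcongr
    _ = |x (n + k) * (2 * d) ^ (n + k)| := by
        rw [abs_mul, abs_pow, abs_of_pos (by positivity : (0 : ℝ) < 2 * d), mul_pow]
        ring

theorem summable_abs_shiftTerm_shiftTerm {x : ℕ → ℝ}
    (hx : ∀ c : ℝ, Summable fun n => |x n * c ^ n|) (n : ℕ) (s t : ℝ) :
    Summable fun p : ℕ × ℕ => |shiftTerm (fun m => shiftTerm x s m p.2) t n p.1| := by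
  rw [summable_iff_summable_sum_antidiagonal_of_nonneg fun _ => abs_nonneg _]
  simp_rw [abs_shiftTerm, sum_antidiagonal_shiftTerm_shiftTerm]
  have hst : |(|s| + |t|)| = |s| + |t| := abs_of_nonneg (by positivity)
  simpa only [abs_shiftTerm, hst] using summable_abs_shiftTerm hx n (|s| + |t|)

theorem summable_abs_shiftTerm_shiftCoeff {x : ℕ → ℝ}
    (hx : ∀ c : ℝ, Summable fun n => |x n * c ^ n|) (n : ℕ) (s t : ℝ) :
    Summable fun m => |shiftTerm (shiftCoeff x s) t n m| := by
  have h := summable_abs_shiftTerm_shiftTerm hx n s t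
  refine h.prod.of_nonneg_of_le (fun _ => abs_nonneg _) fun m => ?_
  rw [shiftTerm_shiftCoeff]
  have hrow : Summable fun l => ‖shiftTerm (fun i => shiftTerm x s i l) t n m‖ := h.prod_factor m
  simpa only [Real.norm_eq_abs] using norm_tsum_le_tsum_norm hrow

theorem shiftCoeff_shiftCoeff {x : ℕ → ℝ}
    (hx : ∀ c : ℝ, Summable fun n => |x n * c ^ n|) (n : ℕ) (s t : ℝ) :
    shiftCoeff (shiftCoeff x s) t n = shiftCoeff x (s + t) n := by
  have h := (summable_abs_shiftTerm_shiftTerm hx n s t).of_abs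
  calc shiftCoeff (shiftCoeff x s) t n
      = ∑' m, ∑' l, shiftTerm (fun i => shiftTerm x s i l) t n m :=
        tsum_congr fun m => shiftTerm_shiftCoeff x s t n m
    _ = ∑' k, ∑ p ∈ antidiagonal k, shiftTerm (fun m => shiftTerm x s m p.2) t n p.1 :=
        h.tsum_prod_eq_tsum_sum_antidiagonal
    _ = shiftCoeff x (s + t) n :=
        tsum_congr fun k => sum_antidiagonal_shiftTerm_shiftTerm x s t n k

/-- Iterated quasi-formal shifts: shifting a convergent formal power series by s and
then by t equals shifting it by s + t; all series involved converge absolutely. -/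
theorem iterated_shifts (x : ℕ → ℝ)
    (hx : ∀ c : ℝ, 0 < c → Tendsto (fun n => x n * c ^ n) atTop (𝓝 0))
    (s t : ℝ) (w : ℕ → ℝ)
    (hw : ∀ m : ℕ, w m = ∑' l : ℕ, ((m + l).choose m : ℝ) * x (m + l) * s ^ l) :
    (∀ m : ℕ, Summable fun l : ℕ => |((m + l).choose m : ℝ) * x (m + l) * s ^ l|) ∧
    (∀ n : ℕ, Summable fun m : ℕ => |((n + m).choose n : ℝ) * w (n + m) * t ^ m|) ∧
    (∀ n : ℕ, Summable fun l : ℕ => |((n + l).choose n : ℝ) * x (n + l) * (s + t) ^ l|) ∧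
    ∀ n : ℕ,
      (∑' m : ℕ, ((n + m).choose n : ℝ) * w (n + m) * t ^ m) =
        ∑' l : ℕ, ((n + l).choose n : ℝ) * x (n + l) * (s + t) ^ l := by
  obtain rfl : w = shiftCoeff x s := funext hw
  have hx' := summable_abs_mul_pow_of_tendsto hx
  exact ⟨fun m => summable_abs_shiftTerm hx' m s,
    fun n => summable_abs_shiftTerm_shiftCoeff hx' n s t,
    fun n => summable_abs_shiftTerm hx' n (s + t),
    fun n => shiftCoeff_shiftCoeff hx' n s t⟩
end
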